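/- arXiv:1711.02880 — 3 statements merged into one kernel-verified Lean document; each statement's English description precedes it below -/
import Mathlib

section
/- In the randomized pool with heterogeneous degrees, fix a type u and suppose G(λ) < ∞ and ∑_{x∈ℕ^I} (∑_{S} x_{(u,S)}) Φ(x) λ^x < ∞. Then the mean number of type-u jobs is L_u = ∑_{ℓ=d_u}^{K} ρ_{u|ℓ} / (1 − ρ_{u|ℓ}), where L_u = ψ ∑_x (∑_S x_{(u,S)}) Φ(x) λ^x and ρ_{u|ℓ} = ( ρ p_u C(ℓ−1,d_u−1)/C(K−1,d_u−1) ) / ( 1 − ρ ∑_{v ≠ u} p_v C(ℓ−1,d_v−1)/C(K−1,d_v−1) ), with the convention C(a,b) = 0 when a < b. -/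
open scoped BigOperators

/-- The balance function of balanced fairness: `Φ(0) = 1` and
`Φ(x) = (∑_{i : x_i > 0} Φ(x - e_i)) / M(⋃_{i : x_i > 0} 𝒦_i)`. -/
noncomputable def Phi {I K : Type} [Fintype I] [DecidableEq I] [DecidableEq K]
    (μ : K → ℝ) (Ka : I → Finset K) (x : I → ℕ) : ℝ :=
  if x = fun _ => 0 then 1
  else (∑ i ∈ (Finset.univ.filter (fun i => 0 < x i)).attach,
      Phi μ Ka (Function.update x i.1 (x i.1 - 1))) /
    (∑ k ∈ (Finset.univ.filter (fun i => 0 < x i)).biUnion Ka, μ k)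
termination_by ∑ i, x i
decreasing_by
  have hi := i.2
  simp only [Finset.mem_filter] at hi
  apply Finset.sum_lt_sum
  · intro j _
    rcases eq_or_ne j i.1 with rfl | h
    · simp [Function.update_self]
    · rw [Function.update_of_ne h]
  · exact ⟨i.1, Finset.mem_univ i.1, by simp [Function.update_self]; omega⟩

/-- The normalization series `G(λ) = ∑_{x∈ℕ^I} Φ(x) λ^x` (as a real tsum). -/
noncomputable def Gf {I K : Type} [Fintype I] [DecidableEq I] [DecidableEq K]
    (μ : K → ℝ) (Ka : I → Finset K) (lam : I → ℝ) : ℝ :=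
  ∑' x : I → ℕ, Phi μ Ka x * ∏ i, lam i ^ x i

/-- Classes of the randomized pool with heterogeneous degrees: a type `u` together with a
`d_u`-element subset of the `K` servers. -/
abbrev HetCls (K N : ℕ) (d : Fin N → ℕ) : Type :=
  Σ u : Fin N, {S : Finset (Fin K) // S.card = d u}

/-- Arrival rate `Kλp_u/C(K,d_u)` of a class of type `u`. -/
noncomputable def hetRate (K N : ℕ) (d : Fin N → ℕ) (p : Fin N → ℝ) (lam : ℝ)
    (c : HetCls K N d) : ℝ :=
  (K : ℝ) * lam * p c.1 / (K.choose (d c.1) : ℝ)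

/-- The load `ρ_{u|ℓ}` associated to type-`u` jobs in the system restricted to `ℓ`
servers (with the convention `C(a,b) = 0` for `a < b`). -/
noncomputable def hetTypeLoad (K N : ℕ) (d : Fin N → ℕ) (p : Fin N → ℝ) (lam μ : ℝ)
    (u : Fin N) (ℓ : ℕ) : ℝ :=
  (lam / μ * p u * ((ℓ - 1).choose (d u - 1) : ℝ) / ((K - 1).choose (d u - 1) : ℝ)) /
    (1 - lam / μ * ∑ v ∈ Finset.univ.erase u,
      p v * ((ℓ - 1).choose (d v - 1) : ℝ) / ((K - 1).choose (d v - 1) : ℝ))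


/-!
Write `S_L(f)` for the sum of `f(x) Φ(x) λ^x` over the states whose busy servers all lie in `L`.
Multiplying the recursion of `Φ` by the capacity of the busy servers and re-indexing `x = y + e_i`
gives, for every `V` with `V(y + e_i) = V(y) + w_i`, the balance identity
`μ ∑_{k ∈ L} (S_L(V) − S_{L∖k}(V)) = ∑_{i : 𝒦_i ⊆ L} λ_i (S_L(V) + w_i S_L(1))`.
The pool is invariant under permutations of the servers, so `S_L` depends only on `ℓ = |L|`, and
counting the classes inside `L` turns the identity into `G_ℓ (μ − λσ_ℓ) = μ G_{ℓ−1}` and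
`T_ℓ (μ − λσ_ℓ) = μ T_{ℓ−1} + λ q_u(ℓ) G_ℓ`, where `G = S(1)`, `T = S(number of type-u jobs)`,
`q_v(ℓ) = p_v C(ℓ−1, d_v−1) / C(K−1, d_v−1)` and `σ_ℓ = ∑_v q_v(ℓ)`. Hence `T_ℓ / G_ℓ` grows by
`λ q_u(ℓ) / (μ − λσ_ℓ) = ρ_{u|ℓ} / (1 − ρ_{u|ℓ})` at each step, an increment that vanishes for
`ℓ < d_u`, and telescoping gives `L_u = T_K / G_K`.
-/

open Finset

section Shift

variable {I : Type} [DecidableEq I]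

lemma update_add_single_sub_one (y : I → ℕ) (i : I) :
    Function.update (y + Pi.single i 1) i ((y + Pi.single i 1 : I → ℕ) i - 1) = y := by
  ext j
  rcases eq_or_ne j i with rfl | h <;> simp [*]

lemma update_sub_one_add_single {x : I → ℕ} {i : I} (hi : 0 < x i) :
    Function.update x i (x i - 1) + Pi.single i 1 = x := by
  ext j
  rcases eq_or_ne j i with rfl | h
  · simp only [Pi.add_apply, Function.update_self, Pi.single_eq_same]
    omega
  · simp [h]

lemma tsum_ite_pos_eq_tsum_add_single (i : I) (g : (I → ℕ) → ℝ) :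
    ∑' x : I → ℕ, (if 0 < x i then g x else 0) = ∑' y : I → ℕ, g (y + Pi.single i 1) := by
  rw [← (add_left_injective (Pi.single i 1 : I → ℕ)).tsum_eq]
  · simp
  · intro x hx
    have hi : 0 < x i := by by_contra h; simp [h] at hx
    exact ⟨_, update_sub_one_add_single hi⟩

lemma summable_ite_pos_iff (i : I) (g : (I → ℕ) → ℝ) :
    Summable (fun x : I → ℕ => if 0 < x i then g x else 0) ↔
      Summable fun y : I → ℕ => g (y + Pi.single i 1) := by
  rw [← (add_left_injective (Pi.single i 1 : I → ℕ)).summable_iff]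
  · simp [Function.comp_def]
  · intro x hx
    by_contra h
    exact hx ⟨_, update_sub_one_add_single (Nat.pos_of_ne_zero fun h0 => h (by simp [h0]))⟩

end Shift

section BalanceFunction

variable {I K : Type} [Fintype I] [DecidableEq K]

def busySet (Ka : I → Finset K) (x : I → ℕ) : Finset K :=
  (univ.filter fun i => 0 < x i).biUnion Ka

lemma busySet_zero (Ka : I → Finset K) : busySet Ka 0 = ∅ := by
  simp [busySet]

lemma busySet_nonempty {Ka : I → Finset K} (hKa : ∀ i, (Ka i).Nonempty) {x : I → ℕ}
    (hx : x ≠ 0) : (busySet Ka x).Nonempty := by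
  obtain ⟨i, hi⟩ := Function.ne_iff.mp hx
  obtain ⟨k, hk⟩ := hKa i
  exact ⟨k, mem_biUnion.mpr ⟨i, by simpa [Nat.pos_iff_ne_zero] using hi, hk⟩⟩

lemma busySet_comp_symm {Ka : I → Finset K} (e : I ≃ I) (π : Equiv.Perm K)
    (hKa : ∀ i, Ka (e i) = (Ka i).map π.toEmbedding) (x : I → ℕ) :
    busySet Ka (x ∘ e.symm) = (busySet Ka x).map π.toEmbedding := by
  ext k
  simp only [busySet, mem_biUnion, mem_filter, mem_univ, true_and, Function.comp_apply, mem_map]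
  constructor
  · rintro ⟨i, hi, hk⟩
    rw [← e.apply_symm_apply i, hKa, mem_map] at hk
    obtain ⟨k', hk', rfl⟩ := hk
    exact ⟨k', ⟨e.symm i, hi, hk'⟩, rfl⟩
  · rintro ⟨k', ⟨j, hj, hk'⟩, rfl⟩
    exact ⟨e j, by simpa using hj, by rw [hKa]; exact mem_map_of_mem _ hk'⟩

variable [DecidableEq I]

lemma busySet_add_single (Ka : I → Finset K) (x : I → ℕ) (i : I) :
    busySet Ka (x + Pi.single i 1 : I → ℕ) = Ka i ∪ busySet Ka x := by
  have : (univ.filter fun j => 0 < (x + Pi.single i 1 : I → ℕ) j) =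
      insert i (univ.filter fun j => 0 < x j) := by
    ext j
    rcases eq_or_ne j i with rfl | h <;> simp [*]
  rw [busySet, this, biUnion_insert, busySet]

lemma sum_update_sub_one_lt (x : I → ℕ) {i : I} (hi : 0 < x i) :
    ∑ j, Function.update x i (x i - 1) j < ∑ j, x j := by
  apply sum_lt_sum (fun j _ => ?_) ⟨i, mem_univ i, by simp; omega⟩
  rcases eq_or_ne j i with rfl | h
  · simp
  · rw [Function.update_of_ne h]

lemma Phi_zero (μ : K → ℝ) (Ka : I → Finset K) : Phi μ Ka 0 = 1 := by
  rw [Phi, if_pos (show (0 : I → ℕ) = fun _ => 0 from rfl)]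

lemma Phi_of_ne_zero (μ : K → ℝ) (Ka : I → Finset K) {x : I → ℕ} (hx : x ≠ 0) :
    Phi μ Ka x = (∑ i, if 0 < x i then Phi μ Ka (Function.update x i (x i - 1)) else 0) /
      ∑ k ∈ busySet Ka x, μ k := by
  rw [Phi, if_neg (show ¬x = fun _ => 0 from hx),
    sum_attach _ fun i => Phi μ Ka (Function.update x i (x i - 1)), sum_filter, busySet]

lemma sum_busySet_mul_Phi {μ : K → ℝ} (hμ : ∀ k, 0 < μ k) {Ka : I → Finset K}
    (hKa : ∀ i, (Ka i).Nonempty) (x : I → ℕ) :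
    (∑ k ∈ busySet Ka x, μ k) * Phi μ Ka x =
      ∑ i, if 0 < x i then Phi μ Ka (Function.update x i (x i - 1)) else 0 := by
  rcases eq_or_ne x 0 with rfl | hx
  · simp [busySet_zero]
  · rw [Phi_of_ne_zero μ Ka hx,
      mul_div_cancel₀ _ (sum_pos (fun k _ => hμ k) (busySet_nonempty hKa hx)).ne']

lemma Phi_nonneg {μ : K → ℝ} (hμ : ∀ k, 0 ≤ μ k) (Ka : I → Finset K) (x : I → ℕ) :
    0 ≤ Phi μ Ka x := by
  induction hn : ∑ i, x i using Nat.strong_induction_on generalizing x with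
  | _ n ih =>
    rcases eq_or_ne x 0 with rfl | hx
    · simp [Phi_zero]
    rw [Phi_of_ne_zero μ Ka hx]
    refine div_nonneg (sum_nonneg fun i _ => ?_) (sum_nonneg fun k _ => hμ k)
    split_ifs with hi
    · exact ih _ (hn ▸ sum_update_sub_one_lt x hi) _ rfl
    · rfl

lemma Phi_comp_symm (μ : K → ℝ) {Ka : I → Finset K} (e : I ≃ I) (π : Equiv.Perm K)
    (hKa : ∀ i, Ka (e i) = (Ka i).map π.toEmbedding) (hμ : ∀ k, μ (π k) = μ k)
    (x : I → ℕ) : Phi μ Ka (x ∘ e.symm) = Phi μ Ka x := by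
  induction hn : ∑ i, x i using Nat.strong_induction_on generalizing x with
  | _ n ih =>
    rcases eq_or_ne x 0 with rfl | hx
    · rfl
    have hx' : x ∘ e.symm ≠ 0 := fun h => hx (funext fun i => by simpa using congrFun h (e i))
    rw [Phi_of_ne_zero μ Ka hx, Phi_of_ne_zero μ Ka hx', busySet_comp_symm e π hKa, sum_map]
    simp only [Equiv.coe_toEmbedding, hμ]
    congr 1
    rw [← e.sum_comp]
    refine sum_congr rfl fun i _ => ?_
    simp only [Function.comp_apply, Equiv.symm_apply_apply]
    split_ifs with hi
    · have hupd : Function.update (x ∘ e.symm) (e i) (x i - 1) =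
          Function.update x i (x i - 1) ∘ e.symm := by
        rw [Function.update_comp_equiv, Equiv.symm_symm]
      rw [hupd, ih _ (hn ▸ sum_update_sub_one_lt x hi) _ rfl]
    · rfl

end BalanceFunction

section RestrictedSum

variable {I K : Type} [Fintype I] [DecidableEq K]

noncomputable def restrictedTsum (Ka : I → Finset K) (L : Finset K) (f : (I → ℕ) → ℝ) : ℝ :=
  ∑' x, {x | busySet Ka x ⊆ L}.indicator f x

lemma sum_mul_indicator_sub_indicator_erase (μ : K → ℝ) (Ka : I → Finset K) (L : Finset K)
    (f : (I → ℕ) → ℝ) (x : I → ℕ) :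
    ∑ k ∈ L, μ k * ({x | busySet Ka x ⊆ L}.indicator f x -
        {x | busySet Ka x ⊆ L.erase k}.indicator f x) =
      {x | busySet Ka x ⊆ L}.indicator (fun x => (∑ k ∈ busySet Ka x, μ k) * f x) x := by
  by_cases hL : busySet Ka x ⊆ L
  · have hterm : ∀ k ∈ L, μ k * (f x - {x | busySet Ka x ⊆ L.erase k}.indicator f x) =
        if k ∈ busySet Ka x then μ k * f x else 0 := fun k _ => by
      by_cases hk : k ∈ busySet Ka x <;> simp [subset_erase, hL, hk]
    simp only [Set.indicator_of_mem (show x ∈ {x | busySet Ka x ⊆ L} from hL)]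
    rw [sum_congr rfl hterm, sum_ite_mem, inter_eq_right.mpr hL, sum_mul]
  · have hL' : ∀ k, ¬busySet Ka x ⊆ L.erase k := fun k h => hL (h.trans (erase_subset k L))
    simp [hL, hL']

lemma sum_mul_restrictedTsum_sub_erase (μ : K → ℝ) (Ka : I → Finset K) (L : Finset K)
    {f : (I → ℕ) → ℝ} (hf : Summable f) :
    ∑ k ∈ L, μ k * (restrictedTsum Ka L f - restrictedTsum Ka (L.erase k) f) =
      ∑' x, {x | busySet Ka x ⊆ L}.indicator (fun x => (∑ k ∈ busySet Ka x, μ k) * f x) x := by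
  simp_rw [restrictedTsum, ← (hf.indicator _).tsum_sub (hf.indicator _), ← tsum_mul_left]
  rw [← Summable.tsum_finsetSum fun k _ => ((hf.indicator _).sub (hf.indicator _)).mul_left _]
  exact tsum_congr (sum_mul_indicator_sub_indicator_erase μ Ka L f)

lemma restrictedTsum_univ [Fintype K] (Ka : I → Finset K) (f : (I → ℕ) → ℝ) :
    restrictedTsum Ka univ f = ∑' x, f x := by
  simp [restrictedTsum]

lemma restrictedTsum_empty {Ka : I → Finset K} (hKa : ∀ i, (Ka i).Nonempty)
    (f : (I → ℕ) → ℝ) : restrictedTsum Ka ∅ f = f 0 := by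
  rw [restrictedTsum, tsum_eq_single 0]
  · simp [busySet_zero]
  · intro x hx
    simp [(busySet_nonempty hKa hx).ne_empty]

lemma apply_zero_le_restrictedTsum {f : (I → ℕ) → ℝ} (hf : Summable f) (hf0 : 0 ≤ f)
    (Ka : I → Finset K) (L : Finset K) : f 0 ≤ restrictedTsum Ka L f := by
  simpa [restrictedTsum, busySet_zero] using (hf.indicator {x | busySet Ka x ⊆ L}).le_tsum 0
    fun x _ => Set.indicator_nonneg (fun x _ => hf0 x) x

end RestrictedSum

section Balance

variable {I K : Type} [Fintype I] [DecidableEq I] [DecidableEq K]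

lemma prod_pow_add_single (lam : I → ℝ) (y : I → ℕ) (i : I) :
    ∏ j, lam j ^ (y + Pi.single i 1 : I → ℕ) j = lam i * ∏ j, lam j ^ y j := by
  simp only [Pi.add_apply, pow_add, prod_mul_distrib, mul_comm (lam i)]
  simp [Pi.single_apply]

noncomputable def stationaryWeight (μ : K → ℝ) (Ka : I → Finset K) (lam : I → ℝ)
    (x : I → ℕ) : ℝ :=
  Phi μ Ka x * ∏ i, lam i ^ x i

lemma stationaryWeight_zero (μ : K → ℝ) (Ka : I → Finset K) (lam : I → ℝ) :
    stationaryWeight μ Ka lam 0 = 1 := by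
  simp [stationaryWeight, Phi_zero]

lemma stationaryWeight_nonneg {μ : K → ℝ} (hμ : ∀ k, 0 ≤ μ k) (Ka : I → Finset K)
    {lam : I → ℝ} (hlam : ∀ i, 0 ≤ lam i) (x : I → ℕ) : 0 ≤ stationaryWeight μ Ka lam x :=
  mul_nonneg (Phi_nonneg hμ Ka x) (prod_nonneg fun i _ => pow_nonneg (hlam i) _)

-- The recursion of `Φ`, summed over the states confined to `L` and re-indexed by `x = y + e_i`.
theorem sum_mul_restrictedTsum_sub_erase_eq {μ : K → ℝ} (hμ : ∀ k, 0 < μ k)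
    {Ka : I → Finset K} (hKa : ∀ i, (Ka i).Nonempty) (lam : I → ℝ)
    {V : (I → ℕ) → ℝ} {w : I → ℝ} (hV : ∀ y i, V (y + Pi.single i 1) = V y + w i)
    (hVW : Summable fun x => V x * stationaryWeight μ Ka lam x)
    (hW : Summable (stationaryWeight μ Ka lam)) (L : Finset K) :
    ∑ k ∈ L, μ k * (restrictedTsum Ka L (fun x => V x * stationaryWeight μ Ka lam x) -
        restrictedTsum Ka (L.erase k) (fun x => V x * stationaryWeight μ Ka lam x)) =
      ∑ i ∈ univ.filter (fun i => Ka i ⊆ L), lam i *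
        (restrictedTsum Ka L (fun x => V x * stationaryWeight μ Ka lam x) +
          w i * restrictedTsum Ka L (stationaryWeight μ Ka lam)) := by
  set W := stationaryWeight μ Ka lam
  set busyIn : Set (I → ℕ) := {x | busySet Ka x ⊆ L}
  set g : I → (I → ℕ) → ℝ := fun i => busyIn.indicator fun x =>
    V x * Phi μ Ka (Function.update x i (x i - 1)) * ∏ j, lam j ^ x j
  have hrec : ∀ x, busyIn.indicator (fun x => (∑ k ∈ busySet Ka x, μ k) * (V x * W x)) x =
      ∑ i, if 0 < x i then g i x else 0 := by
    intro x
    by_cases hx : x ∈ busyIn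
    · simp only [g, W, stationaryWeight, Set.indicator_of_mem hx]
      calc _ = V x * ((∑ k ∈ busySet Ka x, μ k) * Phi μ Ka x) * ∏ i, lam i ^ x i := by ring
        _ = _ := by
          rw [sum_busySet_mul_Phi hμ hKa, mul_sum, sum_mul]
          exact sum_congr rfl fun i _ => by split_ifs <;> ring
    · simp [g, Set.indicator_of_notMem hx]
  have hshift : ∀ i y, g i (y + Pi.single i 1) =
      if Ka i ⊆ L then lam i * (busyIn.indicator (fun x => V x * W x) y +
        w i * busyIn.indicator W y) else 0 := by
    intro i y
    simp only [g, busyIn, W, stationaryWeight, Set.indicator_apply, Set.mem_ofPred_eq,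
      busySet_add_single, union_subset_iff, update_add_single_sub_one, prod_pow_add_single, hV]
    by_cases hi : Ka i ⊆ L <;> by_cases hy : busySet Ka y ⊆ L <;>
      simp only [hi, hy, and_self, and_false, false_and, if_true, if_false] <;> ring
  have hsummable : ∀ i, Summable fun y : I → ℕ => g i (y + Pi.single i 1) := by
    intro i
    simp_rw [hshift]
    by_cases hi : Ka i ⊆ L
    · simpa [hi] using ((hVW.indicator _).add ((hW.indicator _).mul_left (w i))).mul_left (lam i)
    · simp [hi]
  calc _ = ∑' x, busyIn.indicator (fun x => (∑ k ∈ busySet Ka x, μ k) * (V x * W x)) x :=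
        sum_mul_restrictedTsum_sub_erase μ Ka L hVW
    _ = ∑ i, ∑' x, if 0 < x i then g i x else 0 := by
        rw [tsum_congr hrec, Summable.tsum_finsetSum fun i _ =>
          (summable_ite_pos_iff i _).mpr (hsummable i)]
    _ = ∑ i, if Ka i ⊆ L then lam i * (restrictedTsum Ka L (fun x => V x * W x) +
          w i * restrictedTsum Ka L W) else 0 := by
        refine sum_congr rfl fun i _ => ?_
        rw [tsum_ite_pos_eq_tsum_add_single, tsum_congr (hshift i)]
        by_cases hi : Ka i ⊆ L
        · simp only [hi, if_true, restrictedTsum]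
          rw [tsum_mul_left, Summable.tsum_add (hVW.indicator _) ((hW.indicator _).mul_left _),
            tsum_mul_left]
        · simp [hi]
    _ = _ := (sum_filter _ _).symm

end Balance

section Symmetry

variable {I K : Type} [Fintype I] [DecidableEq K]

lemma restrictedTsum_map_perm {Ka : I → Finset K} (e : I ≃ I) (π : Equiv.Perm K)
    (hKa : ∀ i, Ka (e i) = (Ka i).map π.toEmbedding) {f : (I → ℕ) → ℝ}
    (hf : ∀ x, f (x ∘ e.symm) = f x) (L : Finset K) :
    restrictedTsum Ka (L.map π.toEmbedding) f = restrictedTsum Ka L f := by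
  rw [restrictedTsum, ← (e.arrowCongr (Equiv.refl ℕ)).tsum_eq]
  refine tsum_congr fun x => ?_
  have hx : e.arrowCongr (Equiv.refl ℕ) x = x ∘ e.symm := rfl
  simp only [hx, Set.indicator_apply, Set.mem_ofPred_eq, busySet_comp_symm e π hKa,
    map_subset_map, hf]

variable [DecidableEq I]

lemma stationaryWeight_comp_symm {μ : K → ℝ} {Ka : I → Finset K} {lam : I → ℝ} (e : I ≃ I)
    (π : Equiv.Perm K) (hKa : ∀ i, Ka (e i) = (Ka i).map π.toEmbedding)
    (hμ : ∀ k, μ (π k) = μ k) (hlam : ∀ i, lam (e i) = lam i) (x : I → ℕ) :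
    stationaryWeight μ Ka lam (x ∘ e.symm) = stationaryWeight μ Ka lam x := by
  rw [stationaryWeight, stationaryWeight, Phi_comp_symm μ e π hKa hμ, ← e.prod_comp]
  simp [hlam]

end Symmetry

lemma div_eq_sum_Icc_of_recursion {μ : ℝ} {G T b c : ℕ → ℝ} {n : ℕ} (hμ : μ ≠ 0)
    (hG : ∀ ℓ ≤ n, G ℓ ≠ 0) (hT0 : T 0 = 0)
    (hGrec : ∀ ℓ < n, μ * (G (ℓ + 1) - G ℓ) = b (ℓ + 1) * G (ℓ + 1))
    (hTrec : ∀ ℓ < n, μ * (T (ℓ + 1) - T ℓ) = b (ℓ + 1) * T (ℓ + 1) + c (ℓ + 1) * G (ℓ + 1)) :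
    T n / G n = ∑ ℓ ∈ Icc 1 n, c ℓ / (μ - b ℓ) := by
  induction n with
  | zero => simp [hT0]
  | succ n ih =>
    have hGn := hG n (by omega)
    have hGn' := hG (n + 1) le_rfl
    have hb : μ - b (n + 1) ≠ 0 := by
      intro h
      apply mul_ne_zero hμ hGn
      linear_combination -hGrec n (by omega) + G (n + 1) * h
    rw [sum_Icc_succ_top (by omega), ← ih (fun ℓ hℓ => hG ℓ (by omega))
      (fun ℓ hℓ => hGrec ℓ (by omega)) (fun ℓ hℓ => hTrec ℓ (by omega)),
      div_add_div _ _ hGn hb, div_eq_div_iff hGn' (mul_ne_zero hGn hb)]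
    apply mul_left_cancel₀ hμ
    linear_combination (c (n + 1) * G (n + 1) - T (n + 1) * (μ - b (n + 1))) * hGrec n (by omega) +
      (μ - b (n + 1)) * G (n + 1) * hTrec n (by omega)

lemma mul_div_sub_mul_add_eq {lam μ q r : ℝ} (hμ : μ ≠ 0) (hr : lam * r ≠ μ) :
    lam * q / (μ - lam * (q + r)) =
      lam / μ * q / (1 - lam / μ * r) / (1 - lam / μ * q / (1 - lam / μ * r)) := by
  have hr' : 1 - lam / μ * r ≠ 0 := by
    rw [div_mul_eq_mul_div, one_sub_div hμ]
    exact div_ne_zero (sub_ne_zero.mpr hr.symm) hμ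
  rw [one_sub_div hr', div_div_div_cancel_right₀ hr']
  field_simp
  ring

lemma mul_choose_sub_one_eq {d : ℕ} (hd : 1 ≤ d) (n : ℕ) :
    n * (n - 1).choose (d - 1) = n.choose d * d := by
  obtain ⟨d, rfl⟩ := Nat.exists_eq_add_of_le' hd
  cases n with
  | zero => simp
  | succ n => simpa using Nat.add_one_mul_choose_eq n d

lemma cast_mul_choose_div_choose {d K : ℕ} (hd : 1 ≤ d) (hdK : d ≤ K) (ℓ : ℕ) :
    (K : ℝ) * ℓ.choose d / K.choose d = ℓ * (ℓ - 1).choose (d - 1) / (K - 1).choose (d - 1) := by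
  have hK : (0 : ℝ) < K.choose d := by exact_mod_cast Nat.choose_pos hdK
  have hK' : (0 : ℝ) < (K - 1).choose (d - 1) := by exact_mod_cast Nat.choose_pos (by omega)
  have eK : (K : ℝ) * (K - 1).choose (d - 1) = K.choose d * d := by
    exact_mod_cast mul_choose_sub_one_eq hd K
  have eℓ : (ℓ : ℝ) * (ℓ - 1).choose (d - 1) = ℓ.choose d * d := by
    exact_mod_cast mul_choose_sub_one_eq hd ℓ
  rw [div_eq_div_iff hK.ne' hK'.ne']
  linear_combination (ℓ.choose d : ℝ) * eK - (K.choose d : ℝ) * eℓ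

section Pool

variable (K N : ℕ) (d : Fin N → ℕ)

lemma card_filter_subset_eq_choose (m : ℕ) (L : Finset (Fin K)) :
    #{S : {S : Finset (Fin K) // S.card = m} | S.1 ⊆ L} = L.card.choose m := by
  rw [← card_powersetCard, ← card_map (Function.Embedding.subtype _)]
  congr 1
  ext S
  simp [mem_powersetCard, and_comm]

def hetPerm (π : Equiv.Perm (Fin K)) : HetCls K N d ≃ HetCls K N d :=
  Equiv.sigmaCongrRight fun _ => π.finsetCongr.subtypeEquiv fun S => by simp

variable {K N d}

lemma restrictedTsum_hetCls_eq_of_card_eq {f : (HetCls K N d → ℕ) → ℝ}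
    (hf : ∀ π x, f (x ∘ (hetPerm K N d π).symm) = f x) {L L' : Finset (Fin K)}
    (h : L.card = L'.card) :
    restrictedTsum (fun c : HetCls K N d => c.2.1) L f =
      restrictedTsum (fun c : HetCls K N d => c.2.1) L' f := by
  obtain ⟨π, rfl⟩ := Equiv.Perm.exists_map_finset_eq L L' h
  exact (restrictedTsum_map_perm (Ka := fun c : HetCls K N d => c.2.1) (hetPerm K N d π) π
    (fun _ => rfl) (hf π) L).symm

variable (K N d) in
noncomputable def hetShare (p : Fin N → ℝ) (v : Fin N) (ℓ : ℕ) : ℝ :=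
  p v * ((ℓ - 1).choose (d v - 1) : ℝ) / ((K - 1).choose (d v - 1) : ℝ)

lemma hetShare_nonneg {p : Fin N → ℝ} (hp : ∀ v, 0 ≤ p v) (v : Fin N) (ℓ : ℕ) :
    0 ≤ hetShare K N d p v ℓ :=
  div_nonneg (mul_nonneg (hp v) (Nat.cast_nonneg _)) (Nat.cast_nonneg _)

lemma hetShare_eq_zero_of_lt (p : Fin N → ℝ) {v : Fin N} {ℓ : ℕ} (h1 : 1 ≤ ℓ) (h : ℓ < d v) :
    hetShare K N d p v ℓ = 0 := by
  rw [hetShare, Nat.choose_eq_zero_of_lt (by omega : ℓ - 1 < d v - 1)]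
  simp

lemma hetTypeLoad_eq (p : Fin N → ℝ) (lam μ : ℝ) (u : Fin N) (ℓ : ℕ) :
    hetTypeLoad K N d p lam μ u ℓ = lam / μ * hetShare K N d p u ℓ /
      (1 - lam / μ * ∑ v ∈ univ.erase u, hetShare K N d p v ℓ) := by
  rw [hetTypeLoad, hetShare, mul_assoc _ (p u), mul_div_assoc (lam / μ)]
  rfl

lemma sum_hetRate_mul (hd1 : ∀ v, 1 ≤ d v) (hdK : ∀ v, d v ≤ K) (p : Fin N → ℝ) (lam : ℝ)
    (g : Fin N → ℝ) (L : Finset (Fin K)) :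
    ∑ c ∈ univ.filter (fun c : HetCls K N d => c.2.1 ⊆ L), hetRate K N d p lam c * g c.1 =
      lam * L.card * ∑ v, hetShare K N d p v L.card * g v := by
  rw [sum_filter, ← univ_sigma_univ, sum_sigma, mul_sum]
  refine sum_congr rfl fun v _ => ?_
  simp only [hetRate]
  rw [← sum_filter, sum_const, card_filter_subset_eq_choose, nsmul_eq_mul]
  calc _ = lam * p v * g v * ((K : ℝ) * (L.card.choose (d v)) / K.choose (d v)) := by ring
    _ = _ := by rw [cast_mul_choose_div_choose (hd1 v) (hdK v), hetShare]; ring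

lemma sum_hetRate (hd1 : ∀ v, 1 ≤ d v) (hdK : ∀ v, d v ≤ K) (p : Fin N → ℝ) (lam : ℝ)
    (L : Finset (Fin K)) :
    ∑ c ∈ univ.filter (fun c : HetCls K N d => c.2.1 ⊆ L), hetRate K N d p lam c =
      lam * L.card * ∑ v, hetShare K N d p v L.card := by
  simpa using sum_hetRate_mul hd1 hdK p lam (fun _ => 1) L

lemma sum_hetRate_mul_add (hd1 : ∀ v, 1 ≤ d v) (hdK : ∀ v, d v ≤ K) (p : Fin N → ℝ) (lam : ℝ)
    (g : Fin N → ℝ) (L : Finset (Fin K)) (A B : ℝ) :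
    ∑ c ∈ univ.filter (fun c : HetCls K N d => c.2.1 ⊆ L), hetRate K N d p lam c * (A + g c.1 * B) =
      lam * L.card * ((∑ v, hetShare K N d p v L.card) * A +
        (∑ v, hetShare K N d p v L.card * g v) * B) := by
  calc _ = (∑ c ∈ univ.filter (fun c : HetCls K N d => c.2.1 ⊆ L), hetRate K N d p lam c) * A +
        (∑ c ∈ univ.filter (fun c : HetCls K N d => c.2.1 ⊆ L),
          hetRate K N d p lam c * g c.1) * B := by
        rw [sum_mul, sum_mul, ← sum_add_distrib]
        exact sum_congr rfl fun c _ => by ring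
    _ = _ := by rw [sum_hetRate hd1 hdK, sum_hetRate_mul hd1 hdK]; ring

variable (K N d) in
noncomputable def hetWeight (p : Fin N → ℝ) (lam μ : ℝ) : (HetCls K N d → ℕ) → ℝ :=
  stationaryWeight (fun _ : Fin K => μ) (fun c : HetCls K N d => c.2.1) (hetRate K N d p lam)

-- Only the servers `0, …, ℓ - 1` may be busy; by symmetry any `ℓ` servers give the same value.
variable (K N d) in
noncomputable def hetRestrictedTsum (f : (HetCls K N d → ℕ) → ℝ) (ℓ : ℕ) : ℝ :=
  restrictedTsum (fun c : HetCls K N d => c.2.1) (univ.filter fun k : Fin K => (k : ℕ) < ℓ) f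

theorem hetRestrictedTsum_recursion {p : Fin N → ℝ} {lam μ : ℝ} (hμ : 0 < μ)
    (hd1 : ∀ v, 1 ≤ d v) (hdK : ∀ v, d v ≤ K) {V : (HetCls K N d → ℕ) → ℝ} {g : Fin N → ℝ}
    (hV : ∀ y c, V (y + Pi.single c 1) = V y + g c.1)
    (hVperm : ∀ π x, V (x ∘ (hetPerm K N d π).symm) = V x)
    (hVW : Summable fun x => V x * hetWeight K N d p lam μ x)
    (hW : Summable (hetWeight K N d p lam μ)) {ℓ : ℕ} (hℓ : ℓ + 1 ≤ K) :
    μ * (hetRestrictedTsum K N d (fun x => V x * hetWeight K N d p lam μ x) (ℓ + 1) -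
        hetRestrictedTsum K N d (fun x => V x * hetWeight K N d p lam μ x) ℓ) =
      lam * (∑ v, hetShare K N d p v (ℓ + 1)) *
          hetRestrictedTsum K N d (fun x => V x * hetWeight K N d p lam μ x) (ℓ + 1) +
        lam * (∑ v, hetShare K N d p v (ℓ + 1) * g v) *
          hetRestrictedTsum K N d (hetWeight K N d p lam μ) (ℓ + 1) := by
  set W := hetWeight K N d p lam μ
  set L := univ.filter fun k : Fin K => (k : ℕ) < ℓ + 1
  have hcard : ∀ m ≤ K, #(univ.filter fun k : Fin K => (k : ℕ) < m) = m := fun m hm => by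
    simp [Fin.card_filter_val_lt, hm]
  have hWperm : ∀ π x, W (x ∘ (hetPerm K N d π).symm) = W x := fun π =>
    stationaryWeight_comp_symm (Ka := fun c : HetCls K N d => c.2.1) _ π (fun _ => rfl)
      (fun _ => rfl) (fun _ => rfl)
  have herase : ∀ k ∈ L, restrictedTsum (fun c : HetCls K N d => c.2.1) (L.erase k)
      (fun x => V x * W x) = hetRestrictedTsum K N d (fun x => V x * W x) ℓ := fun k hk =>
    restrictedTsum_hetCls_eq_of_card_eq (fun π x => by simp only [hVperm, hWperm])
      (by rw [card_erase_of_mem hk, hcard _ hℓ, hcard _ (by omega)]; rfl)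
  have hbal : ∑ k ∈ L, μ * (hetRestrictedTsum K N d (fun x => V x * W x) (ℓ + 1) -
        restrictedTsum (fun c : HetCls K N d => c.2.1) (L.erase k) (fun x => V x * W x)) =
      ∑ c ∈ univ.filter (fun c : HetCls K N d => c.2.1 ⊆ L), hetRate K N d p lam c *
        (hetRestrictedTsum K N d (fun x => V x * W x) (ℓ + 1) +
          g c.1 * hetRestrictedTsum K N d W (ℓ + 1)) :=
    sum_mul_restrictedTsum_sub_erase_eq (fun _ => hμ)
      (fun c => card_pos.mp (by rw [c.2.2]; exact hd1 c.1)) _ hV hVW hW L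
  rw [sum_congr rfl fun k hk => by rw [herase k hk], sum_const, nsmul_eq_mul,
    sum_hetRate_mul_add hd1 hdK, hcard _ hℓ] at hbal
  push_cast at hbal
  apply mul_left_cancel₀ (show (ℓ + 1 : ℝ) ≠ 0 by positivity)
  linear_combination hbal

end Pool

section PoolMean

variable {K N : ℕ} {d : Fin N → ℕ} {p : Fin N → ℝ} {lam μ : ℝ}

lemma hetRestrictedTsum_top (f : (HetCls K N d → ℕ) → ℝ) :
    hetRestrictedTsum K N d f K = ∑' x, f x := by
  rw [hetRestrictedTsum, filter_true_of_mem fun k _ => k.isLt, restrictedTsum_univ]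

lemma hetRestrictedTsum_zero (hd1 : ∀ v, 1 ≤ d v) (f : (HetCls K N d → ℕ) → ℝ) :
    hetRestrictedTsum K N d f 0 = f 0 := by
  rw [hetRestrictedTsum, filter_false_of_mem fun k _ => Nat.not_lt_zero _,
    restrictedTsum_empty fun c => card_pos.mp (by rw [c.2.2]; exact hd1 c.1)]

lemma one_le_hetRestrictedTsum_weight (hμ : 0 < μ) (hlam : 0 ≤ lam) (hp : ∀ v, 0 ≤ p v)
    (hW : Summable (hetWeight K N d p lam μ)) (ℓ : ℕ) :
    1 ≤ hetRestrictedTsum K N d (hetWeight K N d p lam μ) ℓ := by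
  have hrate : ∀ c, 0 ≤ hetRate K N d p lam c := fun c =>
    div_nonneg (mul_nonneg (mul_nonneg (Nat.cast_nonneg _) hlam) (hp _)) (Nat.cast_nonneg _)
  simpa [hetRestrictedTsum, hetWeight, stationaryWeight_zero] using apply_zero_le_restrictedTsum hW
    (stationaryWeight_nonneg (fun _ => hμ.le) _ hrate) _ _

lemma hetRestrictedTsum_weight_recursion (hμ : 0 < μ) (hd1 : ∀ v, 1 ≤ d v)
    (hdK : ∀ v, d v ≤ K) (hW : Summable (hetWeight K N d p lam μ)) {ℓ : ℕ} (hℓ : ℓ + 1 ≤ K) :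
    μ * (hetRestrictedTsum K N d (hetWeight K N d p lam μ) (ℓ + 1) -
        hetRestrictedTsum K N d (hetWeight K N d p lam μ) ℓ) =
      lam * (∑ v, hetShare K N d p v (ℓ + 1)) *
        hetRestrictedTsum K N d (hetWeight K N d p lam μ) (ℓ + 1) := by
  simpa using hetRestrictedTsum_recursion hμ hd1 hdK (V := fun _ => 1) (g := 0)
    (fun _ _ => (add_zero 1).symm) (fun _ _ => rfl) (by simpa using hW) hW hℓ

lemma lam_mul_sum_hetShare_lt (hμ : 0 < μ) (hlam : 0 ≤ lam) (hp : ∀ v, 0 ≤ p v)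
    (hd1 : ∀ v, 1 ≤ d v) (hdK : ∀ v, d v ≤ K) (hW : Summable (hetWeight K N d p lam μ))
    {ℓ : ℕ} (h1 : 1 ≤ ℓ) (hℓ : ℓ ≤ K) : lam * ∑ v, hetShare K N d p v ℓ < μ := by
  obtain ⟨ℓ, rfl⟩ := Nat.exists_eq_add_of_le' h1
  have hrec := hetRestrictedTsum_weight_recursion hμ hd1 hdK hW hℓ
  have h0 := one_le_hetRestrictedTsum_weight hμ hlam hp hW ℓ
  have h1 := one_le_hetRestrictedTsum_weight hμ hlam hp hW (ℓ + 1)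
  nlinarith

theorem hetRestrictedTsum_div_eq_sum_Icc (hμ : 0 < μ) (hlam : 0 ≤ lam)
    (hp : ∀ v, 0 ≤ p v) (hd1 : ∀ v, 1 ≤ d v) (hdK : ∀ v, d v ≤ K) (g : Fin N → ℝ)
    (hVW : Summable fun x => (∑ c, g c.1 * x c) * hetWeight K N d p lam μ x)
    (hW : Summable (hetWeight K N d p lam μ)) :
    hetRestrictedTsum K N d (fun x => (∑ c, g c.1 * x c) * hetWeight K N d p lam μ x) K /
        hetRestrictedTsum K N d (hetWeight K N d p lam μ) K =
      ∑ ℓ ∈ Icc 1 K, lam * (∑ v, hetShare K N d p v ℓ * g v) /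
        (μ - lam * ∑ v, hetShare K N d p v ℓ) := by
  refine div_eq_sum_Icc_of_recursion hμ.ne'
    (fun ℓ _ => (zero_lt_one.trans_le (one_le_hetRestrictedTsum_weight hμ hlam hp hW ℓ)).ne')
    (by simp [hetRestrictedTsum_zero hd1]) (fun ℓ hℓ => ?_) (fun ℓ hℓ => ?_)
  · rw [hetRestrictedTsum_weight_recursion hμ hd1 hdK hW hℓ, mul_assoc]
  · refine hetRestrictedTsum_recursion hμ hd1 hdK (fun y c => ?_) (fun π x => ?_) hVW hW hℓ
    · simp [mul_add, sum_add_distrib, Pi.single_apply]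
    · exact (hetPerm K N d π).symm.sum_comp fun c => g c.1 * x c

lemma mul_hetShare_div_eq_hetTypeLoad_div (hμ : 0 < μ) (hlam : 0 ≤ lam) (hp : ∀ v, 0 ≤ p v)
    (hd1 : ∀ v, 1 ≤ d v) (hdK : ∀ v, d v ≤ K) (hW : Summable (hetWeight K N d p lam μ))
    (u : Fin N) {ℓ : ℕ} (h1 : 1 ≤ ℓ) (hℓ : ℓ ≤ K) :
    lam * hetShare K N d p u ℓ / (μ - lam * ∑ v, hetShare K N d p v ℓ) =
      hetTypeLoad K N d p lam μ u ℓ / (1 - hetTypeLoad K N d p lam μ u ℓ) := by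
  have hlt := lam_mul_sum_hetShare_lt hμ hlam hp hd1 hdK hW h1 hℓ
  have hu : 0 ≤ lam * hetShare K N d p u ℓ := mul_nonneg hlam (hetShare_nonneg hp u ℓ)
  rw [← add_sum_erase _ _ (mem_univ u)] at hlt ⊢
  rw [hetTypeLoad_eq]
  exact mul_div_sub_mul_add_eq hμ.ne' (by nlinarith)

end PoolMean

theorem heterogeneous_degrees_randomized_pool_mean_jobs_per_type_general
    (K N : ℕ)
    (d : Fin N → ℕ) (hd1 : ∀ u, 1 ≤ d u) (hdK : ∀ u, d u ≤ K)
    (lam μ : ℝ) (hlam : 0 < lam) (hμ : 0 < μ)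
    (p : Fin N → ℝ) (hp : ∀ u, 0 ≤ p u)
    (u : Fin N)
    (hG : Summable (fun x : HetCls K N d → ℕ =>
      Phi (fun _ : Fin K => μ) (fun c => c.2.1) x *
        ∏ c, hetRate K N d p lam c ^ x c))
    (hLu : Summable (fun x : HetCls K N d → ℕ =>
      (∑ S : {S : Finset (Fin K) // S.card = d u}, (x ⟨u, S⟩ : ℝ)) *
        (Phi (fun _ : Fin K => μ) (fun c => c.2.1) x *
          ∏ c, hetRate K N d p lam c ^ x c))) :
    (Gf (fun _ : Fin K => μ) (fun c : HetCls K N d => c.2.1)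
        (hetRate K N d p lam))⁻¹ *
      (∑' x : HetCls K N d → ℕ,
        (∑ S : {S : Finset (Fin K) // S.card = d u}, (x ⟨u, S⟩ : ℝ)) *
          (Phi (fun _ : Fin K => μ) (fun c => c.2.1) x *
            ∏ c, hetRate K N d p lam c ^ x c)) =
      ∑ ℓ ∈ Finset.Icc (d u) K,
        hetTypeLoad K N d p lam μ u ℓ / (1 - hetTypeLoad K N d p lam μ u ℓ) := by
  have htype : ∀ x : HetCls K N d → ℕ, ∑ S : {S : Finset (Fin K) // S.card = d u}, (x ⟨u, S⟩ : ℝ)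
      = ∑ c : HetCls K N d, (if c.1 = u then 1 else 0) * (x c : ℝ) := fun x => by
    rw [← univ_sigma_univ, sum_sigma, sum_eq_single u (fun v _ hv => by simp [hv]) (by simp)]
    simp
  have hmean := hetRestrictedTsum_div_eq_sum_Icc hμ hlam.le hp hd1 hdK
    (fun v => if v = u then 1 else 0) (by simp only [htype] at hLu; exact hLu) hG
  simp only [hetRestrictedTsum_top, ← htype, mul_ite, mul_one, mul_zero, sum_ite_eq',
    mem_univ, if_true] at hmean
  rw [Gf, inv_mul_eq_div]
  refine hmean.trans ((sum_subset (Icc_subset_Icc_left (hd1 u)) fun ℓ hℓ hnot => ?_).symm.trans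
    (sum_congr rfl fun ℓ hℓ => ?_))
  · rw [mem_Icc] at hℓ hnot
    rw [hetShare_eq_zero_of_lt p hℓ.1 (by omega), mul_zero, zero_div]
  · obtain ⟨hduℓ, hℓK⟩ := mem_Icc.mp hℓ
    exact mul_hetShare_div_eq_hetTypeLoad_div hμ hlam.le hp hd1 hdK hG u
      ((hd1 u).trans hduℓ) hℓK

/-- In the randomized pool with heterogeneous degrees, if `G(λ) < ∞`
and the series `∑_x (∑_S x_{(u,S)}) Φ(x) λ^x` converges, then the mean number of
type-`u` jobs is `L_u = ∑_{ℓ=d_u}^K ρ_{u|ℓ}/(1 − ρ_{u|ℓ})`. -/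
theorem heterogeneous_degrees_randomized_pool_mean_jobs_per_type
    (K N : ℕ) (hK : 1 ≤ K) (hN : 1 ≤ N)
    (d : Fin N → ℕ) (hd1 : ∀ u, 1 ≤ d u) (hdK : ∀ u, d u ≤ K)
    (lam μ : ℝ) (hlam : 0 < lam) (hμ : 0 < μ)
    (p : Fin N → ℝ) (hp : ∀ u, 0 ≤ p u) (hp1 : ∑ u, p u = 1)
    (u : Fin N)
    (hG : Summable (fun x : HetCls K N d → ℕ =>
      Phi (fun _ : Fin K => μ) (fun c => c.2.1) x *
        ∏ c, hetRate K N d p lam c ^ x c))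
    (hLu : Summable (fun x : HetCls K N d → ℕ =>
      (∑ S : {S : Finset (Fin K) // S.card = d u}, (x ⟨u, S⟩ : ℝ)) *
        (Phi (fun _ : Fin K => μ) (fun c => c.2.1) x *
          ∏ c, hetRate K N d p lam c ^ x c))) :
    (Gf (fun _ : Fin K => μ) (fun c : HetCls K N d => c.2.1)
        (hetRate K N d p lam))⁻¹ *
      (∑' x : HetCls K N d → ℕ,
        (∑ S : {S : Finset (Fin K) // S.card = d u}, (x ⟨u, S⟩ : ℝ)) *
          (Phi (fun _ : Fin K => μ) (fun c => c.2.1) x *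
            ∏ c, hetRate K N d p lam c ^ x c)) =
      ∑ ℓ ∈ Finset.Icc (d u) K,
        hetTypeLoad K N d p lam μ u ℓ / (1 - hetTypeLoad K N d p lam μ u ℓ) :=
  heterogeneous_degrees_randomized_pool_mean_jobs_per_type_general K N d hd1 hdK lam μ hlam hμ p hp
    u hG hLu
end

section
/- Let E be a finite set and let F be a family of subsets of E such that for all A, B ∈ F, if A ∩ B ≠ ∅ then A ⊆ B or B ⊆ A. Then there exists a bijection σ : E → {1, …, |E|} such that for every A ∈ F, the image σ(A) is a set of consecutive integers, i.e. σ(A) = {a, a+1, …, b} for some a ≤ b. (In the language of the paper: every nested pool is a line pool.) -/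
/-!
List `E` recursively: for a finset `s`, take a member `A ⊂ s` of `F` that is nonempty and
inclusion-maximal, and list `A` followed by `s \ A`, both ordered recursively. By laminarity and
maximality, every member of `F` inside `s` lies in `A`, lies in `s \ A`, or is `s` itself, so it
occupies a block of consecutive positions. Labelling each element of `E` by its position in the
list gives `σ`.
-/

open Finset

def IsLaminar {E : Type*} [DecidableEq E] (F : Set (Finset E)) : Prop :=
  ∀ A ∈ F, ∀ B ∈ F, (A ∩ B).Nonempty → A ⊆ B ∨ B ⊆ A

namespace IsLaminar

variable {E : Type*} [DecidableEq E] {F : Set (Finset E)} {s A B : Finset E}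

theorem subset_or_subset_sdiff_or_eq (hF : IsLaminar F)
    (hA : Maximal (fun C => C ∈ F ∧ C ⊂ s ∧ C.Nonempty) A) (hB : B ∈ F) (hBs : B ⊆ s) :
    B ⊆ A ∨ B ⊆ s \ A ∨ B = s := by
  obtain ⟨⟨hAF, hAs, hAne⟩, hAmax⟩ := hA
  by_cases hBA : (B ∩ A).Nonempty
  · rcases hF B hB A hAF hBA with h | hAB
    · exact Or.inl h
    · by_cases hBeq : B = s
      · exact Or.inr (Or.inr hBeq)
      · exact Or.inl (hAmax ⟨hB, hBs.ssubset_of_ne hBeq, hAne.mono hAB⟩ hAB)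
  · rw [not_nonempty_iff_eq_empty, ← disjoint_iff_inter_eq_empty] at hBA
    exact Or.inr (Or.inl (subset_sdiff.mpr ⟨hBs, hBA⟩))

theorem exists_nodup_list_forall_infix (hF : IsLaminar F) (s : Finset E) :
    ∃ l : List E, l.Nodup ∧ l.toFinset = s ∧
      ∀ A ∈ F, A ⊆ s → ∃ l', l' <:+: l ∧ l'.toFinset = A := by
  induction s using Finset.strongInduction with
  | H s ih =>
  by_cases h : ∃ A ∈ F, A ⊂ s ∧ A.Nonempty
  · have hfin : {C | C ∈ F ∧ C ⊂ s ∧ C.Nonempty}.Finite :=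
      s.powerset.finite_toSet.subset fun C hC => mem_powerset.mpr hC.2.1.subset
    obtain ⟨A₀, hA₀⟩ := h
    obtain ⟨A, hA⟩ := hfin.exists_maximal ⟨A₀, hA₀⟩
    obtain ⟨hAF, hAs, hAne⟩ := hA.prop
    obtain ⟨lA, hlA, rfl, hblA⟩ := ih A hAs
    obtain ⟨lB, hlB, hlBs, hblB⟩ := ih (s \ lA.toFinset) (sdiff_ssubset hAs.subset hAne)
    refine ⟨lA ++ lB, ?_, ?_, fun B hB hBs => ?_⟩
    · refine List.nodup_append.mpr ⟨hlA, hlB, fun x hxA y hyB hxy => ?_⟩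
      rw [← List.mem_toFinset, hlBs, ← hxy] at hyB
      exact (mem_sdiff.mp hyB).2 (List.mem_toFinset.mpr hxA)
    · rw [List.toFinset_append, hlBs, union_sdiff_of_subset hAs.subset]
    · rcases hF.subset_or_subset_sdiff_or_eq hA hB hBs with hBA | hBA | rfl
      · obtain ⟨l', hl', rfl⟩ := hblA B hB hBA
        exact ⟨l', hl'.trans (List.prefix_append lA lB).isInfix, rfl⟩
      · obtain ⟨l', hl', rfl⟩ := hblB B hB hBA
        exact ⟨l', hl'.trans (List.suffix_append lA lB).isInfix, rfl⟩
      · refine ⟨lA ++ lB, List.infix_refl _, ?_⟩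
        rw [List.toFinset_append, hlBs, union_sdiff_of_subset hAs.subset]
  · push Not at h
    refine ⟨s.toList, s.nodup_toList, s.toList_toFinset, fun A hA hAs => ?_⟩
    obtain rfl | hne := eq_or_ne A s
    · exact ⟨A.toList, List.infix_refl _, A.toList_toFinset⟩
    · obtain rfl := h A hA (hAs.ssubset_of_ne hne)
      exact ⟨[], List.nil_infix, rfl⟩

end IsLaminar

theorem List.Nodup.exists_image_idxOf_eq_Ico {α : Type*} [DecidableEq α] {l l' : List α}
    (hl : l.Nodup) (h : l' <:+: l) :
    ∃ a, l'.toFinset.image l.idxOf = Finset.Ico a (a + l'.length) := by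
  obtain ⟨l₁, l₃, rfl⟩ := h
  have hidx (x : α) (hx : x ∈ l') : (l₁ ++ l' ++ l₃).idxOf x = l₁.length + l'.idxOf x := by
    have hx₁ : x ∉ l₁ := fun hx₁ =>
      List.disjoint_of_nodup_append (List.nodup_append.mp hl).1 hx₁ hx
    rw [List.append_assoc, List.idxOf_append_of_notMem hx₁, List.idxOf_append_of_mem hx]
  refine ⟨l₁.length, eq_of_subset_of_card_le (fun k hk => ?_) ?_⟩
  · obtain ⟨x, hx, rfl⟩ := mem_image.mp hk
    rw [List.mem_toFinset] at hx
    rw [mem_Ico, hidx x hx]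
    have := List.idxOf_lt_length_of_mem hx
    omega
  · rw [Nat.card_Ico, Nat.add_sub_cancel_left, card_image_of_injOn, List.toFinset_card_of_nodup]
    · exact (List.nodup_append.mp (List.nodup_append.mp hl).1).2.1
    · intro x hx y hy hxy
      rw [mem_coe, List.mem_toFinset] at hx hy
      simp only [hidx x hx, hidx y hy, Nat.add_left_cancel_iff] at hxy
      exact (List.idxOf_inj hx).1 hxy

theorem Nat.exists_Icc_eq_Ico (a c : ℕ) : ∃ b d, Finset.Icc b d = Finset.Ico a c := by
  rcases Nat.lt_or_ge a c with h | h
  · obtain ⟨d, rfl⟩ := Nat.exists_eq_add_of_lt h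
    exact ⟨a, a + d, (Finset.Ico_add_one_right_eq_Icc a (a + d)).symm⟩
  · exact ⟨1, 0, by simp [Finset.Ico_eq_empty_of_le h]⟩

/-- **every nested pool is a line pool.** If `F` is a laminar family of
subsets of a finite set `E` (any two intersecting members are comparable under
inclusion), then there is a bijection `σ` from `E` to `{1, …, |E|}` (here
`Fin (Fintype.card E)`) mapping every member of `F` to a set of consecutive integers,
i.e. to an integer interval `{a, a+1, …, b}`. -/
theorem laminar_family_has_interval_labelling
    {E : Type} [Fintype E] [DecidableEq E] (F : Set (Finset E))
    (hF : ∀ A ∈ F, ∀ B ∈ F, (A ∩ B).Nonempty → A ⊆ B ∨ B ⊆ A) :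
    ∃ σ : E ≃ Fin (Fintype.card E),
      ∀ A ∈ F, ∃ a b : ℕ,
        A.image (fun e => ((σ e : Fin (Fintype.card E)) : ℕ)) = Finset.Icc a b := by
  obtain ⟨l, hl, hlE, hblocks⟩ := IsLaminar.exists_nodup_list_forall_infix hF univ
  have hmem (x : E) : x ∈ l := List.mem_toFinset.mp (hlE ▸ mem_univ x)
  have hlen : l.length = Fintype.card E := by
    rw [← List.toFinset_card_of_nodup hl, hlE, card_univ]
  refine ⟨(hl.getEquivOfForallMemList l hmem).symm.trans (finCongr hlen), fun A hA => ?_⟩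
  obtain ⟨l', hl', rfl⟩ := hblocks A hA (subset_univ A)
  obtain ⟨a, ha⟩ := hl.exists_image_idxOf_eq_Ico hl'
  obtain ⟨b, c, hbc⟩ := Nat.exists_Icc_eq_Ico a (a + l'.length)
  exact ⟨b, c, by rw [hbc, ← ha]; rfl⟩
end

section
/- In a ring pool, suppose G(λ) < ∞. Then the probability that the system is empty satisfies ψ = ( M(K) − Λ(I) ) / ( ∑_{k ∈ ℤ/Kℤ} μ_k / ψ_{|k+1..k−1} ), where for each server k, ψ_{|k+1..k−1} is the empty probability of the restricted system obtained by removing server k, i.e. keeping the servers other than k and only the classes whose arc does not contain k. -/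
open scoped BigOperators

/-- Classes of a ring pool with `K` servers indexed by `ℤ/Kℤ`: a starting server `i` and
an arc length `ℓ ∈ {1, …, K−1}` (encoded as `j : Fin (K-1)` with `ℓ = j + 1`). -/
abbrev RingCls (K : ℕ) : Type := ZMod K × Fin (K - 1)

/-- The arc of servers `{i, i+1, …, i+ℓ−1}` (mod `K`) assigned to the class `(i, ℓ)`. -/
def ringKa {K : ℕ} [NeZero K] (c : RingCls K) : Finset (ZMod K) :=
  (Finset.range ((c.2 : ℕ) + 1)).image (fun t : ℕ => c.1 + (t : ZMod K))

/-- Arrival rates of the ring system with server `k` removed: the classes whose arc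
contains `k` get arrival rate `0`. -/
noncomputable def ringLamMinus {K : ℕ} [NeZero K] (lam : RingCls K → ℝ) (k : ZMod K)
    (c : RingCls K) : ℝ :=
  if k ∈ ringKa c then 0 else lam c

/-
Write `f(x) = Φ(x) λ^x` and `D(x)` for the total rate of the servers busy in state `x`.
Multiplying the balance equation `D(x) Φ(x) = ∑_{c : x_c > 0} Φ(x - e_c)` by `λ^x` and summing
over `x` gives `∑_x D(x) f(x) = Λ G`. Removing server `k` kills exactly the states in which `k`
is busy, so `∑_k μ_k G_{-k} = ∑_x (M - D(x)) f(x) = (M - Λ) G`. Each `G_{-k}` is at least `1`,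
which forces `M > Λ`, and dividing by `(M - Λ) G` gives the formula.
-/

open Finset Function

noncomputable section

namespace BalancedFairness

variable {I K : Type} [Fintype I] [DecidableEq K] (μ : K → ℝ) (Ka : I → Finset K)

def activeServers (x : I → ℕ) : Finset K := ({c | 0 < x c} : Finset I).biUnion Ka

def activeRate (x : I → ℕ) : ℝ := ∑ k ∈ activeServers Ka x, μ k

def ratesWithout (lam : I → ℝ) (k : K) (c : I) : ℝ := if k ∈ Ka c then 0 else lam c

omit [Fintype I] in
lemma ratesWithout_nonneg {lam : I → ℝ} (hlam : ∀ c, 0 ≤ lam c) (k : K) (c : I) :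
    0 ≤ ratesWithout Ka lam k c := by
  unfold ratesWithout
  split_ifs
  exacts [le_rfl, hlam c]

lemma activeRate_zero : activeRate μ Ka (0 : I → ℕ) = 0 := by
  simp [activeRate, activeServers]

lemma activeRate_nonneg (hμ : ∀ k, 0 ≤ μ k) (x : I → ℕ) : 0 ≤ activeRate μ Ka x :=
  sum_nonneg fun k _ => hμ k

lemma activeRate_pos (hμ : ∀ k, 0 < μ k) (hKa : ∀ c, (Ka c).Nonempty) {x : I → ℕ}
    (hx : x ≠ 0) : 0 < activeRate μ Ka x := by
  obtain ⟨c, hc⟩ : ∃ c, x c ≠ 0 := by simpa [funext_iff] using hx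
  obtain ⟨k, hk⟩ := hKa c
  exact sum_pos (fun k _ => hμ k)
    ⟨k, mem_biUnion.2 ⟨c, by simpa [Nat.pos_iff_ne_zero] using hc, hk⟩⟩

variable [DecidableEq I]

def weight (lam : I → ℝ) (x : I → ℕ) : ℝ := Phi μ Ka x * ∏ c, lam c ^ x c

lemma Phi_zero : Phi μ Ka 0 = 1 := by
  rw [Phi]; exact if_pos rfl

lemma Phi_eq_div {x : I → ℕ} (hx : x ≠ 0) :
    Phi μ Ka x = (∑ c ∈ {c | 0 < x c}, Phi μ Ka (update x c (x c - 1))) / activeRate μ Ka x := by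
  rw [Phi, if_neg (show x ≠ fun _ => 0 from hx),
    sum_attach _ fun c => Phi μ Ka (update x c (x c - 1))]
  rfl

lemma Phi_nonneg (hμ : ∀ k, 0 ≤ μ k) (x : I → ℕ) : 0 ≤ Phi μ Ka x := by
  induction h : ∑ c, x c using Nat.strong_induction_on generalizing x with
  | _ n ih =>
    rcases eq_or_ne x 0 with rfl | hx
    · rw [Phi_zero]; exact zero_le_one
    rw [Phi_eq_div μ Ka hx]
    refine div_nonneg (sum_nonneg fun c hc => ih _ ?_ _ rfl) (activeRate_nonneg μ Ka hμ x)
    rw [← h]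
    refine sum_lt_sum (fun i _ => ?_) ⟨c, mem_univ c, ?_⟩
    all_goals grind [update_apply]

lemma activeRate_mul_Phi (hμ : ∀ k, 0 < μ k) (hKa : ∀ c, (Ka c).Nonempty) {x : I → ℕ}
    (hx : x ≠ 0) :
    activeRate μ Ka x * Phi μ Ka x = ∑ c ∈ {c | 0 < x c}, Phi μ Ka (update x c (x c - 1)) := by
  rw [Phi_eq_div μ Ka hx, mul_div_cancel₀ _ (activeRate_pos μ Ka hμ hKa hx).ne']

lemma prod_pow_eq_mul_prod_pow_update_pred (lam : I → ℝ) {x : I → ℕ} {c : I} (hc : 0 < x c) :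
    ∏ i, lam i ^ x i = lam c * ∏ i, lam i ^ update x c (x c - 1) i := by
  rw [← mul_prod_erase _ _ (mem_univ c), ← mul_prod_erase _ _ (mem_univ c), update_self,
    ← mul_assoc, ← pow_succ', Nat.sub_add_cancel hc]
  congr 1
  exact prod_congr rfl fun i hi => by rw [update_of_ne (ne_of_mem_erase hi)]

lemma activeRate_mul_weight (hμ : ∀ k, 0 < μ k) (hKa : ∀ c, (Ka c).Nonempty) (lam : I → ℝ)
    (x : I → ℕ) :
    activeRate μ Ka x * weight μ Ka lam x =
      ∑ c, if 0 < x c then lam c * weight μ Ka lam (update x c (x c - 1)) else 0 := by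
  rcases eq_or_ne x 0 with rfl | hx
  · simp [activeRate_zero]
  rw [weight, ← mul_assoc, activeRate_mul_Phi μ Ka hμ hKa hx, sum_mul, sum_filter]
  refine sum_congr rfl fun c _ => ?_
  split_ifs with hc
  · rw [prod_pow_eq_mul_prod_pow_update_pred lam hc, weight]
    ring
  · rfl

omit [Fintype I] in
/-- Reindexing by the injection `y ↦ y + e_c`, whose range is `{x | 0 < x c}`. -/
lemma hasSum_update_pred {α : Type*} [AddCommMonoid α] [TopologicalSpace α]
    {g : (I → ℕ) → α} {a : α} (c : I) (hg : HasSum g a) :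
    HasSum (fun x => if 0 < x c then g (update x c (x c - 1)) else 0) a := by
  have hinj : Injective fun y : I → ℕ => update y c (y c + 1) := fun y z h => by
    have := congrArg (fun x => update x c (x c - 1)) h
    simpa using this
  refine (hinj.hasSum_iff fun x hx => if_neg fun hc => hx ⟨update x c (x c - 1), ?_⟩).1 ?_
  · simp only [update_self, Nat.sub_add_cancel hc, update_idem, update_eq_self]
  · convert hg using 1
    funext y
    simp

lemma hasSum_activeRate_mul_weight (hμ : ∀ k, 0 < μ k) (hKa : ∀ c, (Ka c).Nonempty)
    {lam : I → ℝ} (hG : Summable (weight μ Ka lam)) :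
    HasSum (fun x => activeRate μ Ka x * weight μ Ka lam x) ((∑ c, lam c) * Gf μ Ka lam) := by
  simp_rw [activeRate_mul_weight μ Ka hμ hKa, sum_mul]
  exact hasSum_sum fun c _ =>
    hasSum_update_pred (g := fun y => lam c * weight μ Ka lam y) c (hG.hasSum.mul_left (lam c))

lemma weight_nonneg (hμ : ∀ k, 0 ≤ μ k) {lam : I → ℝ} (hlam : ∀ c, 0 ≤ lam c) (x : I → ℕ) :
    0 ≤ weight μ Ka lam x :=
  mul_nonneg (Phi_nonneg μ Ka hμ x) (prod_nonneg fun c _ => pow_nonneg (hlam c) _)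

lemma one_le_Gf (hμ : ∀ k, 0 ≤ μ k) {lam : I → ℝ} (hlam : ∀ c, 0 ≤ lam c)
    (hG : Summable (weight μ Ka lam)) : 1 ≤ Gf μ Ka lam := by
  refine le_of_eq_of_le ?_ (hG.le_tsum 0 fun x _ => weight_nonneg μ Ka hμ hlam x)
  simp [weight, Phi_zero]

lemma weight_ratesWithout (lam : I → ℝ) (k : K) (x : I → ℕ) :
    weight μ Ka (ratesWithout Ka lam k) x =
      if k ∈ activeServers Ka x then 0 else weight μ Ka lam x := by
  split_ifs with hk
  · obtain ⟨c, hc, hkc⟩ := mem_biUnion.1 hk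
    rw [weight, prod_eq_zero (mem_univ c), mul_zero]
    rw [ratesWithout, if_pos hkc, zero_pow (mem_filter.1 hc).2.ne']
  · refine congrArg _ (prod_congr rfl fun c _ => ?_)
    rcases Nat.eq_zero_or_pos (x c) with hc | hc
    · rw [hc, pow_zero, pow_zero]
    · rw [ratesWithout, if_neg fun hkc => hk (mem_biUnion.2 ⟨c, by simpa using hc, hkc⟩)]

lemma summable_weight_ratesWithout (hμ : ∀ k, 0 ≤ μ k) {lam : I → ℝ} (hlam : ∀ c, 0 ≤ lam c)
    (hG : Summable (weight μ Ka lam)) (k : K) :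
    Summable (weight μ Ka (ratesWithout Ka lam k)) := by
  refine hG.of_nonneg_of_le (fun x => ?_) fun x => ?_ <;> rw [weight_ratesWithout] <;> split_ifs
  exacts [le_rfl, weight_nonneg μ Ka hμ hlam x, weight_nonneg μ Ka hμ hlam x, le_rfl]

lemma sum_mul_weight_ratesWithout [Fintype K] (lam : I → ℝ) (x : I → ℕ) :
    ∑ k, μ k * weight μ Ka (ratesWithout Ka lam k) x =
      ((∑ k, μ k) - activeRate μ Ka x) * weight μ Ka lam x := by
  simp_rw [weight_ratesWithout, mul_ite, mul_zero]
  rw [sum_ite, sum_const_zero, zero_add, ← sum_mul, activeRate,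
    ← sum_filter_add_sum_filter_not univ (· ∈ activeServers Ka x) μ, filter_mem_eq_inter,
    univ_inter, add_sub_cancel_left]

theorem sum_mul_Gf_ratesWithout [Fintype K] (hμ : ∀ k, 0 < μ k) (hKa : ∀ c, (Ka c).Nonempty)
    {lam : I → ℝ} (hlam : ∀ c, 0 ≤ lam c) (hG : Summable (weight μ Ka lam)) :
    ∑ k, μ k * Gf μ Ka (ratesWithout Ka lam k) = ((∑ k, μ k) - ∑ c, lam c) * Gf μ Ka lam := by
  have hrestricted := hasSum_sum fun k (_ : k ∈ univ) =>
    ((summable_weight_ratesWithout μ Ka (fun k => (hμ k).le) hlam hG k).hasSum.mul_left (μ k))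
  simp_rw [sum_mul_weight_ratesWithout] at hrestricted
  have hfull := (hG.hasSum.mul_left (∑ k, μ k)).sub (hasSum_activeRate_mul_weight μ Ka hμ hKa hG)
  simp_rw [← sub_mul] at hfull
  rw [sub_mul]
  exact hrestricted.unique hfull

theorem sum_lam_lt_sum_mu [Fintype K] [Nonempty K] (hμ : ∀ k, 0 < μ k)
    (hKa : ∀ c, (Ka c).Nonempty) {lam : I → ℝ} (hlam : ∀ c, 0 ≤ lam c)
    (hG : Summable (weight μ Ka lam)) : ∑ c, lam c < ∑ k, μ k := by
  have hpos : 0 < ∑ k, μ k * Gf μ Ka (ratesWithout Ka lam k) :=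
    sum_pos (fun k _ => mul_pos (hμ k) (zero_lt_one.trans_le (one_le_Gf μ Ka
      (fun k => (hμ k).le) (ratesWithout_nonneg Ka hlam k)
      (summable_weight_ratesWithout μ Ka (fun k => (hμ k).le) hlam hG k)))) univ_nonempty
  rw [sum_mul_Gf_ratesWithout μ Ka hμ hKa hlam hG] at hpos
  exact sub_pos.1 (pos_of_mul_pos_left hpos (zero_le_one.trans (one_le_Gf μ Ka
    (fun k => (hμ k).le) hlam hG)))

theorem Gf_inv_eq [Fintype K] [Nonempty K] (hμ : ∀ k, 0 < μ k) (hKa : ∀ c, (Ka c).Nonempty)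
    {lam : I → ℝ} (hlam : ∀ c, 0 ≤ lam c) (hG : Summable (weight μ Ka lam)) :
    (Gf μ Ka lam)⁻¹ =
      ((∑ k, μ k) - ∑ c, lam c) / ∑ k, μ k / (Gf μ Ka (ratesWithout Ka lam k))⁻¹ := by
  simp_rw [div_inv_eq_mul]
  rw [sum_mul_Gf_ratesWithout μ Ka hμ hKa hlam hG, div_mul_cancel_left₀
    (sub_pos.2 (sum_lam_lt_sum_mu μ Ka hμ hKa hlam hG)).ne']

end BalancedFairness

end

lemma ringKa_nonempty {K : ℕ} [NeZero K] (c : RingCls K) : (ringKa c).Nonempty :=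
  ⟨c.1, mem_image.2 ⟨0, mem_range.2 (Nat.succ_pos _), by simp⟩⟩

theorem ring_pool_empty_probability_general
    (K : ℕ) [NeZero K]
    (μ : ZMod K → ℝ) (hμ : ∀ k, 0 < μ k)
    (lam : RingCls K → ℝ) (hlam : ∀ c, 0 ≤ lam c)
    (hG : Summable (fun x : RingCls K → ℕ =>
      Phi μ ringKa x * ∏ c, lam c ^ x c)) :
    (Gf μ ringKa lam)⁻¹ =
      ((∑ k, μ k) - ∑ c, lam c) /
        ∑ k : ZMod K, μ k / (Gf μ ringKa (ringLamMinus lam k))⁻¹ :=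
  BalancedFairness.Gf_inv_eq μ ringKa hμ ringKa_nonempty hlam hG

/-- **Proposition 5, empty probability of a ring pool.** If `G(λ) < ∞`
then `ψ = (M(K) − Λ(I)) / (∑_k μ_k / ψ_{|k+1..k−1})`, where `ψ_{|k+1..k−1}` is the empty
probability of the line system obtained by removing server `k`. -/
theorem ring_pool_empty_probability
    (K : ℕ) [NeZero K] (hK : 2 ≤ K)
    (μ : ZMod K → ℝ) (hμ : ∀ k, 0 < μ k)
    (lam : RingCls K → ℝ) (hlam : ∀ c, 0 ≤ lam c)
    (hG : Summable (fun x : RingCls K → ℕ =>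
      Phi μ ringKa x * ∏ c, lam c ^ x c)) :
    (Gf μ ringKa lam)⁻¹ =
      ((∑ k, μ k) - ∑ c, lam c) /
        ∑ k : ZMod K, μ k / (Gf μ ringKa (ringLamMinus lam k))⁻¹ :=
  ring_pool_empty_probability_general K μ hμ lam hlam hG
end
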